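/- Let n ≥ 1 and let y_1, …, y_n be i.i.d. real random variables with mean μ, each symmetric about μ, and let w_1, …, w_n be i.i.d. Rademacher random variables independent of (y_1, …, y_n). Then for every α ∈ (0,1), P( ȳ_n − μ > q_α(y − μ) ) ≤ α, where q_α(y − μ) is the Rademacher multiplier bootstrap quantile of the vector (y_1 − μ, …, y_n − μ). -/

import Mathlib

open MeasureTheory ProbabilityTheory Real

/-- The Rademacher distribution on `ℝ`: `+1` and `-1` each with probability `1/2`. -/
noncomputable def radMeasure : Measure ℝ :=
  (2⁻¹ : ENNReal) • Measure.dirac 1 + (2⁻¹ : ENNReal) • Measure.dirac (-1)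

/-- The law of `n` i.i.d. Rademacher weights. -/
noncomputable def radPi (n : ℕ) : Measure (Fin n → ℝ) :=
  Measure.pi fun _ => radMeasure

/-- The Rademacher multiplier bootstrap quantile
`q_α(v) = inf {x : P_w(n⁻¹ ∑ i, w i * v i > x) ≤ α}`. -/
noncomputable def bootQuantile (n : ℕ) (v : Fin n → ℝ) (α : ℝ) : ℝ :=
  sInf {x : ℝ | radPi n {w | (∑ i, w i * v i) / n > x} ≤ ENNReal.ofReal α}

/-! ### Auxiliary lemmas -/

instance radMeasure_prob : IsProbabilityMeasure radMeasure := by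
  constructor
  simp [radMeasure, ENNReal.inv_two_add_inv_two]

instance radPi_prob (n : ℕ) : IsProbabilityMeasure (radPi n) := by
  unfold radPi; infer_instance

lemma radMeasure_map_neg : radMeasure.map (fun x : ℝ => -x) = radMeasure := by
  rw [radMeasure, Measure.map_add _ _ measurable_neg, Measure.map_smul, Measure.map_smul,
    Measure.map_dirac' measurable_neg, Measure.map_dirac' measurable_neg]
  simp [radMeasure, add_comm]

lemma signSet_eq : {x : ℝ | x = 1 ∨ x = -1} = ({1} ∪ {-1} : Set ℝ) := by
  ext x; simp [Set.mem_union]; tauto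

lemma signSet_meas : MeasurableSet {x : ℝ | x = 1 ∨ x = -1} := by
  rw [signSet_eq]
  exact (measurableSet_singleton _).union (measurableSet_singleton _)

lemma radMeasure_signs : radMeasure {x : ℝ | x = 1 ∨ x = -1} = 1 := by
  rw [radMeasure, Measure.add_apply, Measure.smul_apply, Measure.smul_apply,
    Measure.dirac_apply' _ signSet_meas, Measure.dirac_apply' _ signSet_meas]
  norm_num [Set.indicator_apply, ENNReal.inv_two_add_inv_two]

lemma signs_pi_eq (n : ℕ) : {w : Fin n → ℝ | ∀ i, w i = 1 ∨ w i = -1}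
    = Set.pi Set.univ (fun _ => {x : ℝ | x = 1 ∨ x = -1}) := by
  ext w; simp [Set.mem_pi]

lemma signs_measurable (n : ℕ) :
    MeasurableSet {w : Fin n → ℝ | ∀ i, w i = 1 ∨ w i = -1} := by
  rw [signs_pi_eq]
  exact MeasurableSet.univ_pi fun _ => signSet_meas

lemma radPi_signs (n : ℕ) : radPi n {w | ∀ i, w i = 1 ∨ w i = -1} = 1 := by
  rw [signs_pi_eq, radPi, Measure.pi_pi]
  simp [radMeasure_signs]

lemma radPi_signs_compl (n : ℕ) :
    radPi n ({w | ∀ i, w i = 1 ∨ w i = -1}ᶜ) = 0 := by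
  rw [measure_compl (signs_measurable n) (measure_ne_top _ _), radPi_signs n, measure_univ,
    tsub_self]

lemma signs_ae (n : ℕ) : ∀ᵐ w ∂radPi n, ∀ i, w i = 1 ∨ w i = -1 := by
  rw [ae_iff]
  exact radPi_signs_compl n

lemma avg_measurable (n : ℕ) (v : Fin n → ℝ) :
    Measurable fun w : Fin n → ℝ => (∑ i, w i * v i) / (n : ℝ) :=
  (Finset.measurable_sum _ fun i _ => (measurable_pi_apply i).mul_const _).div_const _

lemma tail_mono (n : ℕ) (v : Fin n → ℝ) {x y : ℝ} (h : x ≤ y) :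
    radPi n {w | (∑ i, w i * v i) / n > y} ≤ radPi n {w | (∑ i, w i * v i) / n > x} :=
  measure_mono fun _ hw => lt_of_le_of_lt h hw

lemma mul_sign_le {a b : ℝ} (h : a = 1 ∨ a = -1) : a * b ≤ |b| := by
  rcases h with h | h <;> rw [h]
  · rw [one_mul]; exact le_abs_self b
  · rw [neg_one_mul]; exact neg_le_abs b

lemma neg_abs_le_mul_sign {a b : ℝ} (h : a = 1 ∨ a = -1) : -|b| ≤ a * b := by
  rcases h with h | h <;> rw [h]
  · rw [one_mul]; exact neg_abs_le b
  · rw [neg_one_mul]; exact neg_le_neg (le_abs_self b)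

lemma bootSet_nonempty (n : ℕ) (v : Fin n → ℝ) {α : ℝ} (hα0 : 0 < α) :
    ∃ x, radPi n {w | (∑ i, w i * v i) / n > x} ≤ ENNReal.ofReal α := by
  refine ⟨(∑ i, |v i|) / n, ?_⟩
  have hsub : {w : Fin n → ℝ | (∑ i, w i * v i) / n > (∑ i, |v i|) / n}
      ⊆ {w | ∀ i, w i = 1 ∨ w i = -1}ᶜ := by
    intro w hw
    simp only [Set.mem_compl_iff, Set.mem_setOf_eq]
    intro hsg
    have hsum : (∑ i, w i * v i) ≤ ∑ i, |v i| :=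
      Finset.sum_le_sum fun i _ => mul_sign_le (hsg i)
    exact absurd hw (not_lt.mpr (div_le_div_of_nonneg_right hsum (Nat.cast_nonneg n)))
  calc radPi n {w : Fin n → ℝ | (∑ i, w i * v i) / n > (∑ i, |v i|) / n}
      ≤ radPi n ({w | ∀ i, w i = 1 ∨ w i = -1}ᶜ) := measure_mono hsub
    _ = 0 := radPi_signs_compl n
    _ ≤ ENNReal.ofReal α := zero_le

lemma bootSet_bddBelow (n : ℕ) (v : Fin n → ℝ) {α : ℝ} (hα1 : α < 1) :
    BddBelow {x : ℝ | radPi n {w | (∑ i, w i * v i) / n > x} ≤ ENNReal.ofReal α} := by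
  refine ⟨-((∑ i, |v i|) / n) - 1, fun x hx => ?_⟩
  by_contra hlt
  push_neg at hlt
  have hsub : {w : Fin n → ℝ | ∀ i, w i = 1 ∨ w i = -1}
      ⊆ {w | (∑ i, w i * v i) / n > x} := by
    intro w hsg
    simp only [Set.mem_setOf_eq] at hsg ⊢
    have h1 : -(∑ i, |v i|) ≤ ∑ i, w i * v i := by
      have : (∑ i, -|v i|) ≤ ∑ i, w i * v i :=
        Finset.sum_le_sum fun i _ => neg_abs_le_mul_sign (hsg i)
      rwa [Finset.sum_neg_distrib] at this
    have h2 : -((∑ i, |v i|) / n) ≤ (∑ i, w i * v i) / n := by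
      rw [← neg_div]
      exact div_le_div_of_nonneg_right h1 (Nat.cast_nonneg n)
    calc x < -((∑ i, |v i|) / n) - 1 := hlt
      _ ≤ -((∑ i, |v i|) / n) := by linarith
      _ ≤ _ := h2
  have hge : (1 : ENNReal) ≤ ENNReal.ofReal α := by
    calc (1 : ENNReal) = radPi n {w | ∀ i, w i = 1 ∨ w i = -1} := (radPi_signs n).symm
      _ ≤ radPi n {w | (∑ i, w i * v i) / n > x} := measure_mono hsub
      _ ≤ _ := hx
  exact absurd hge (not_le.mpr (ENNReal.ofReal_lt_one.mpr hα1))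

lemma quantile_tail_le (n : ℕ) (v : Fin n → ℝ) {α : ℝ} (hα0 : 0 < α) (hα1 : α < 1) :
    radPi n {w | (∑ i, w i * v i) / n > bootQuantile n v α} ≤ ENNReal.ofReal α := by
  have hne := bootSet_nonempty n v hα0
  have hbdd := bootSet_bddBelow n v hα1
  have key : ∀ x : ℝ, bootQuantile n v α < x →
      radPi n {w | (∑ i, w i * v i) / n > x} ≤ ENNReal.ofReal α := by
    intro x hx
    obtain ⟨b, hb, hbx⟩ := (csInf_lt_iff hbdd hne).mp hx
    exact le_trans (tail_mono n v hbx.le) hb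
  have hmono : Monotone fun k : ℕ =>
      {w : Fin n → ℝ | (∑ i, w i * v i) / n > bootQuantile n v α + ((k : ℝ) + 1)⁻¹} := by
    intro k l hkl w hw
    simp only [Set.mem_setOf_eq] at hw ⊢
    have hinv : ((l : ℝ) + 1)⁻¹ ≤ ((k : ℝ) + 1)⁻¹ := by
      apply inv_anti₀ (by positivity)
      have : (k : ℝ) ≤ (l : ℝ) := by exact_mod_cast hkl
      linarith
    exact lt_of_le_of_lt (add_le_add_right hinv _) hw
  have hset : {w : Fin n → ℝ | (∑ i, w i * v i) / n > bootQuantile n v α}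
      = ⋃ k : ℕ, {w | (∑ i, w i * v i) / n > bootQuantile n v α + ((k : ℝ) + 1)⁻¹} := by
    ext w
    simp only [Set.mem_setOf_eq, Set.mem_iUnion]
    constructor
    · intro h
      obtain ⟨k, hk⟩ := exists_nat_one_div_lt (sub_pos.mpr h)
      rw [one_div] at hk
      exact ⟨k, by linarith⟩
    · rintro ⟨k, hk⟩
      have hpos : (0 : ℝ) < ((k : ℝ) + 1)⁻¹ := by positivity
      linarith
  rw [hset, Monotone.measure_iUnion hmono]
  exact iSup_le fun k => key _ (lt_add_of_pos_right _ (by positivity))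

lemma radPi_flip_invariant (n : ℕ) {s : Fin n → ℝ} (hs : ∀ i, s i = 1 ∨ s i = -1) :
    MeasurePreserving (fun w : Fin n → ℝ => fun i => s i * w i) (radPi n) (radPi n) := by
  have h : ∀ i : Fin n, MeasurePreserving (fun x : ℝ => s i * x) radMeasure radMeasure := by
    intro i
    rcases hs i with h | h
    · have heq : (fun x : ℝ => s i * x) = id := funext fun x => by rw [h, one_mul]; rfl
      rw [heq]
      exact MeasurePreserving.id _
    · have heq : (fun x : ℝ => s i * x) = fun x : ℝ => -x := funext fun x => by
        rw [h, neg_one_mul]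
      rw [heq]
      exact ⟨measurable_neg, radMeasure_map_neg⟩
  exact measurePreserving_pi _ _ h

lemma quantile_signflip (n : ℕ) (v : Fin n → ℝ) (α : ℝ) {s : Fin n → ℝ}
    (hs : ∀ i, s i = 1 ∨ s i = -1) :
    bootQuantile n (fun i => s i * v i) α = bootQuantile n v α := by
  have hmp := radPi_flip_invariant n hs
  unfold bootQuantile
  congr 1
  ext x
  have hms : MeasurableSet {w : Fin n → ℝ | (∑ i, w i * v i) / n > x} :=
    measurableSet_lt measurable_const (avg_measurable n v)
  have hpre : (fun w : Fin n → ℝ => fun i => s i * w i) ⁻¹' {w | (∑ i, w i * v i) / n > x}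
      = {w : Fin n → ℝ | (∑ i, w i * (s i * v i)) / n > x} := by
    ext w
    simp only [Set.mem_preimage, Set.mem_setOf_eq]
    have hsum : (∑ i, s i * w i * v i) = ∑ i, w i * (s i * v i) :=
      Finset.sum_congr rfl fun i _ => by ring
    rw [hsum]
  simp only [Set.mem_setOf_eq]
  rw [← hpre, hmp.measure_preimage hms.nullMeasurableSet]

lemma measurable_tail (n : ℕ) (x : ℝ) :
    Measurable fun v : Fin n → ℝ => radPi n {w : Fin n → ℝ | (∑ i, w i * v i) / n > x} := by
  have hjoint : MeasurableSet {p : (Fin n → ℝ) × (Fin n → ℝ) | (∑ i, p.2 i * p.1 i) / n > x} := by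
    apply measurableSet_lt measurable_const
    apply Measurable.div_const
    exact Finset.measurable_sum _ fun i _ =>
      ((measurable_pi_apply i).comp measurable_snd).mul ((measurable_pi_apply i).comp measurable_fst)
  exact measurable_measure_prodMk_left hjoint

lemma measurableSet_B (n : ℕ) {α : ℝ} (hα0 : 0 < α) (hα1 : α < 1) :
    MeasurableSet {u : Fin n → ℝ | bootQuantile n u α < (∑ i, u i) / n} := by
  have hBeq : {u : Fin n → ℝ | bootQuantile n u α < (∑ i, u i) / n}
      = ⋃ r : ℚ, ({u : Fin n → ℝ | radPi n {w | (∑ i, w i * u i) / n > (r : ℝ)} ≤ ENNReal.ofReal α}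
          ∩ {u : Fin n → ℝ | (r : ℝ) < (∑ i, u i) / n}) := by
    ext u
    simp only [Set.mem_setOf_eq, Set.mem_iUnion, Set.mem_inter_iff]
    constructor
    · intro h
      obtain ⟨b, hb, hbu⟩ :=
        (csInf_lt_iff (bootSet_bddBelow n u hα1) (bootSet_nonempty n u hα0)).mp h
      obtain ⟨r, hbr, hru⟩ := exists_rat_btwn hbu
      exact ⟨r, le_trans (tail_mono n u hbr.le) hb, hru⟩
    · rintro ⟨r, hr, hru⟩
      exact lt_of_le_of_lt (csInf_le (bootSet_bddBelow n u hα1) hr) hru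
  rw [hBeq]
  refine MeasurableSet.iUnion fun r => MeasurableSet.inter ?_ ?_
  · exact measurableSet_le (measurable_tail n r) measurable_const
  · exact measurableSet_lt measurable_const
      ((Finset.measurable_sum _ fun i _ => measurable_pi_apply i).div_const _)

lemma law_pi {Ω : Type*} [MeasurableSpace Ω] (P : Measure Ω) [IsProbabilityMeasure P]
    {n : ℕ} (f : Fin n → Ω → ℝ) (hmeas : ∀ i, Measurable (f i))
    (hind : iIndepFun f P) :
    Measure.map (fun ω i => f i ω) P = Measure.pi fun i => Measure.map (f i) P := by
  haveI : ∀ i, IsProbabilityMeasure (Measure.map (f i) P) :=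
    fun i => Measure.isProbabilityMeasure_map (hmeas i).aemeasurable
  refine (Measure.pi_eq fun s hs => ?_).symm
  rw [Measure.map_apply (measurable_pi_lambda _ hmeas) (MeasurableSet.univ_pi hs)]
  have hpre : (fun ω i => f i ω) ⁻¹' Set.pi Set.univ s = ⋂ i ∈ Finset.univ, f i ⁻¹' s i := by
    ext ω; simp [Set.mem_pi]
  rw [hpre, hind.measure_inter_preimage_eq_mul Finset.univ fun i _ => hs i]
  exact Finset.prod_congr rfl fun i _ => (Measure.map_apply (hmeas i) (hs i)).symm

lemma map_mul_prod_rad (m : Measure ℝ) [IsProbabilityMeasure m]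
    (hsym : m.map (fun x : ℝ => -x) = m) :
    Measure.map (fun q : ℝ × ℝ => q.2 * q.1) (m.prod radMeasure) = m := by
  have hf : Measurable fun q : ℝ × ℝ => q.2 * q.1 := measurable_snd.mul measurable_fst
  ext s hs
  rw [Measure.map_apply hf hs, Measure.prod_apply (hf hs)]
  have hmt : MeasurableSet ((fun x : ℝ => -x) ⁻¹' s) := measurable_neg hs
  have hint : ∀ x : ℝ, radMeasure (Prod.mk x ⁻¹' ((fun q : ℝ × ℝ => q.2 * q.1) ⁻¹' s))
      = 2⁻¹ * s.indicator (1 : ℝ → ENNReal) x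
        + 2⁻¹ * ((fun x : ℝ => -x) ⁻¹' s).indicator (1 : ℝ → ENNReal) x := by
    intro x
    have hms : MeasurableSet {w : ℝ | w * x ∈ s} := (measurable_id.mul_const x) hs
    have hpre : Prod.mk x ⁻¹' ((fun q : ℝ × ℝ => q.2 * q.1) ⁻¹' s) = {w : ℝ | w * x ∈ s} := rfl
    rw [hpre, radMeasure, Measure.add_apply, Measure.smul_apply, Measure.smul_apply,
      Measure.dirac_apply' _ hms, Measure.dirac_apply' _ hms]
    have i1 : ({w : ℝ | w * x ∈ s}).indicator (1 : ℝ → ENNReal) 1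
        = s.indicator (1 : ℝ → ENNReal) x := by
      by_cases h : x ∈ s <;> simp [Set.indicator_apply, h]
    have i2 : ({w : ℝ | w * x ∈ s}).indicator (1 : ℝ → ENNReal) (-1)
        = ((fun x : ℝ => -x) ⁻¹' s).indicator (1 : ℝ → ENNReal) x := by
      by_cases h : -x ∈ s <;> simp [Set.indicator_apply, Set.mem_preimage, h]
    rw [i1, i2]; simp [smul_eq_mul]
  rw [lintegral_congr hint]
  have hm1 : Measurable (s.indicator (1 : ℝ → ENNReal)) :=
    measurable_const.indicator hs
  have hm2 : Measurable (((fun x : ℝ => -x) ⁻¹' s).indicator (1 : ℝ → ENNReal)) :=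
    measurable_const.indicator hmt
  rw [lintegral_add_left (hm1.const_mul _), lintegral_const_mul _ hm1, lintegral_const_mul _ hm2,
    lintegral_indicator_one hs, lintegral_indicator_one hmt,
    ← Measure.map_apply measurable_neg hs, hsym, ← add_mul, ENNReal.inv_two_add_inv_two, one_mul]

lemma mapT {n : ℕ} (ν : Fin n → Measure ℝ) [∀ i, IsProbabilityMeasure (ν i)]
    (hsym : ∀ i, (ν i).map (fun x : ℝ => -x) = ν i) :
    Measure.map (fun p : (Fin n → ℝ) × (Fin n → ℝ) => fun i => p.2 i * p.1 i)
      ((Measure.pi ν).prod (radPi n)) = Measure.pi ν := by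
  have hT : Measurable fun p : (Fin n → ℝ) × (Fin n → ℝ) => fun i => p.2 i * p.1 i :=
    measurable_pi_lambda _ fun i =>
      ((measurable_pi_apply i).comp measurable_snd).mul ((measurable_pi_apply i).comp measurable_fst)
  have he := measurePreserving_arrowProdEquivProdArrow ℝ ℝ (Fin n) ν (fun _ => radMeasure)
  have hprod : (Measure.pi ν).prod (radPi n)
      = Measure.map (MeasurableEquiv.arrowProdEquivProdArrow ℝ ℝ (Fin n))
          (Measure.pi fun i => (ν i).prod radMeasure) := by
    rw [he.map_eq]; rfl
  rw [hprod, Measure.map_map hT (MeasurableEquiv.arrowProdEquivProdArrow ℝ ℝ (Fin n)).measurable]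
  have hcomp : ((fun p : (Fin n → ℝ) × (Fin n → ℝ) => fun i => p.2 i * p.1 i)
        ∘ (MeasurableEquiv.arrowProdEquivProdArrow ℝ ℝ (Fin n)))
      = fun p : Fin n → ℝ × ℝ => fun i => (p i).2 * (p i).1 := rfl
  rw [hcomp]
  exact (measurePreserving_pi _ _ fun i =>
    (⟨measurable_snd.mul measurable_fst, map_mul_prod_rad (ν i) (hsym i)⟩ :
      MeasurePreserving _ ((ν i).prod radMeasure) (ν i))).map_eq

/-- For symmetric i.i.d. rewards, the bootstrapped quantile around the true mean is a valid
threshold: `P(ȳ_n - μ > q_α(y - μ)) ≤ α`. -/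
theorem bootstrap_quantile_around_mean_valid
    {Ω : Type*} [MeasurableSpace Ω] (P : Measure Ω) [IsProbabilityMeasure P]
    (n : ℕ) (hn : 1 ≤ n) (μ : ℝ)
    (y w : Fin n → Ω → ℝ)
    (hymeas : ∀ i, Measurable (y i))
    (hyindep : iIndepFun y P)
    (hyident : ∀ i j, Measure.map (y i) P = Measure.map (y j) P)
    (hyint : ∀ i, Integrable (y i) P)
    (hymean : ∀ i, ∫ ω, y i ω ∂P = μ)
    (hysym : ∀ i, Measure.map (fun ω => y i ω - μ) P = Measure.map (fun ω => μ - y i ω) P)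
    (hwmeas : ∀ i, Measurable (w i))
    (hwindep : iIndepFun w P)
    (hwdist : ∀ i, Measure.map (w i) P = radMeasure)
    (hyw : IndepFun (fun ω i => y i ω) (fun ω i => w i ω) P)
    (α : ℝ) (hα0 : 0 < α) (hα1 : α < 1) :
    P {ω | bootQuantile n (fun i => y i ω - μ) α < (∑ i, y i ω) / n - μ} ≤
      ENNReal.ofReal α := by
  classical
  have hnpos : (0 : ℝ) < n := by exact_mod_cast hn
  set ν : Fin n → Measure ℝ := fun i => Measure.map (fun ω => y i ω - μ) P with hν
  have hYimeas : ∀ i, Measurable fun ω => y i ω - μ :=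
    fun i => (hymeas i).sub measurable_const
  haveI : ∀ i, IsProbabilityMeasure (ν i) :=
    fun i => Measure.isProbabilityMeasure_map (hYimeas i).aemeasurable
  have hsymν : ∀ i, (ν i).map (fun x : ℝ => -x) = ν i := by
    intro i
    rw [hν]
    rw [Measure.map_map measurable_neg (hYimeas i)]
    have hfun : ((fun x : ℝ => -x) ∘ fun ω => y i ω - μ) = fun ω => μ - y i ω := by
      funext ω; simp [neg_sub]
    rw [hfun, ← hysym i]
  have hYmeas : Measurable (fun ω i => y i ω - μ : Ω → Fin n → ℝ) :=
    measurable_pi_lambda _ hYimeas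
  have hWmeas : Measurable (fun ω i => w i ω : Ω → Fin n → ℝ) :=
    measurable_pi_lambda _ hwmeas
  have hYindep : iIndepFun (fun i ω => y i ω - μ) P := by
    have := hyindep.comp (fun _ (x : ℝ) => x - μ) (fun _ => measurable_id.sub measurable_const)
    exact this
  have hYlaw : Measure.map (fun ω i => y i ω - μ) P = Measure.pi ν :=
    law_pi P _ hYimeas hYindep
  have hWlaw : Measure.map (fun ω i => w i ω) P = radPi n := by
    rw [law_pi P w hwmeas hwindep, radPi]
    congr 1
    funext i
    exact hwdist i
  have hIndYW : IndepFun (fun ω i => y i ω - μ) (fun ω i => w i ω) P := by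
    have := hyw.comp (φ := fun u : Fin n → ℝ => fun i => u i - μ) (ψ := id)
      (measurable_pi_lambda _ fun i => (measurable_pi_apply i).sub measurable_const)
      measurable_id
    exact this
  have hjoint : Measure.map (fun ω => (fun i => y i ω - μ, fun i => w i ω)) P
      = (Measure.pi ν).prod (radPi n) := by
    rw [← hYlaw, ← hWlaw]
    exact (indepFun_iff_map_prod_eq_prod_map_map hYmeas.aemeasurable hWmeas.aemeasurable).mp hIndYW
  have hBmeas := measurableSet_B n hα0 hα1
  have hEvent : {ω | bootQuantile n (fun i => y i ω - μ) α < (∑ i, y i ω) / ↑n - μ}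
      = (fun ω i => y i ω - μ) ⁻¹' {u : Fin n → ℝ | bootQuantile n u α < (∑ i, u i) / n} := by
    ext ω
    simp only [Set.mem_setOf_eq, Set.mem_preimage]
    have havg : (∑ i, (y i ω - μ)) / (n : ℝ) = (∑ i, y i ω) / n - μ := by
      rw [Finset.sum_sub_distrib, Finset.sum_const, Finset.card_univ, Fintype.card_fin,
        nsmul_eq_mul, sub_div, mul_div_cancel_left₀ _ (ne_of_gt hnpos)]
    rw [havg]
  rw [hEvent, ← Measure.map_apply hYmeas hBmeas, hYlaw, ← mapT ν hsymν]
  have hT : Measurable fun p : (Fin n → ℝ) × (Fin n → ℝ) => fun i => p.2 i * p.1 i :=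
    measurable_pi_lambda _ fun i =>
      ((measurable_pi_apply i).comp measurable_snd).mul ((measurable_pi_apply i).comp measurable_fst)
  rw [Measure.map_apply hT hBmeas, Measure.prod_apply (hT hBmeas)]
  have hbound : ∀ v : Fin n → ℝ,
      radPi n (Prod.mk v ⁻¹' ((fun p : (Fin n → ℝ) × (Fin n → ℝ) => fun i => p.2 i * p.1 i) ⁻¹'
        {u : Fin n → ℝ | bootQuantile n u α < (∑ i, u i) / n}))
      ≤ ENNReal.ofReal α := by
    intro v
    have hsub : (Prod.mk v ⁻¹' ((fun p : (Fin n → ℝ) × (Fin n → ℝ) => fun i => p.2 i * p.1 i) ⁻¹'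
          {u : Fin n → ℝ | bootQuantile n u α < (∑ i, u i) / n}))
        ≤ᵐ[radPi n] {w : Fin n → ℝ | (∑ i, w i * v i) / n > bootQuantile n v α} := by
      filter_upwards [signs_ae n] with w hsg
      intro hw
      have hq := quantile_signflip n v α hsg
      rw [← hq]
      exact hw
    exact le_trans (measure_mono_ae hsub) (quantile_tail_le n v hα0 hα1)
  calc ∫⁻ v, radPi n (Prod.mk v ⁻¹' ((fun p : (Fin n → ℝ) × (Fin n → ℝ) => fun i => p.2 i * p.1 i)
        ⁻¹' {u : Fin n → ℝ | bootQuantile n u α < (∑ i, u i) / n})) ∂Measure.pi ν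
      ≤ ∫⁻ _, ENNReal.ofReal α ∂Measure.pi ν := lintegral_mono hbound
    _ = ENNReal.ofReal α := by
        rw [lintegral_const, measure_univ, mul_one]
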